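/- For symmetric matrices X and Y, every eigenvalue of X + Y lies within ‖Y‖₂ of some eigenvalue of X; in particular, if the eigenvalues of X lie in [a,b], the eigenvalues of X+Y lie in [a − ‖Y‖₂, b + ‖Y‖₂] (Weyl's inequality used in Section 6). -/

import Mathlib

/-!
Let `v` be a unit eigenvector of `X + Y` with eigenvalue `μ`. In an orthonormal eigenbasis of `X`
with coefficients `c_j`, `‖(X - μ) v‖² = ∑ (λ_j - μ)² |c_j|² ≥ min_j (λ_j - μ)²`, while
`(X - μ) v = -Y v` has norm at most `‖Y‖₂`.
-/

open Matrix

/-- The spectral norm (ℓ²-operator norm) of a real square matrix. -/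
noncomputable def matrixSpectralNorm (n : ℕ) (M : Matrix (Fin n) (Fin n) ℝ) : ℝ :=
  ‖LinearMap.toContinuousLinearMap (Matrix.toEuclideanLin M)‖

namespace OrthonormalBasis

variable {ι 𝕜 E : Type*} [Fintype ι] [RCLike 𝕜] [NormedAddCommGroup E] [InnerProductSpace 𝕜 E]

theorem repr_apply_of_apply_eq_smul (b : OrthonormalBasis ι 𝕜 E) {T : E →ₗ[𝕜] E} {d : ι → 𝕜}
    (hT : ∀ i, T (b i) = d i • b i) (v : E) (i : ι) :
    b.repr (T v) i = d i * b.repr v i := by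
  classical
  conv_lhs => rw [← b.sum_repr v]
  simp [map_sum, hT, smul_smul, OrthonormalBasis.repr_self, Pi.single_apply, mul_comm]

theorem norm_sq_eq_sum_norm_sq_repr (b : OrthonormalBasis ι 𝕜 E) (v : E) :
    ‖v‖ ^ 2 = ∑ i, ‖b.repr v i‖ ^ 2 := by
  rw [← b.repr.norm_map v, PiLp.norm_sq_eq_of_L2]

theorem exists_norm_sub_mul_norm_le_norm_apply_sub [Nonempty ι] (b : OrthonormalBasis ι 𝕜 E)
    {T : E →ₗ[𝕜] E} {d : ι → 𝕜} (hT : ∀ i, T (b i) = d i • b i) (μ : 𝕜) (v : E) :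
    ∃ i, ‖d i - μ‖ * ‖v‖ ≤ ‖T v - μ • v‖ := by
  obtain ⟨i, -, hi⟩ := Finset.univ.exists_min_image (fun j ↦ ‖d j - μ‖) Finset.univ_nonempty
  refine ⟨i, le_of_sq_le_sq ?_ (norm_nonneg _)⟩
  have hrepr : ∀ j, b.repr (T v - μ • v) j = (d j - μ) * b.repr v j := fun j ↦ by
    simp [b.repr_apply_of_apply_eq_smul hT, sub_mul]
  calc (‖d i - μ‖ * ‖v‖) ^ 2 = ∑ j, ‖d i - μ‖ ^ 2 * ‖b.repr v j‖ ^ 2 := by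
        rw [mul_pow, b.norm_sq_eq_sum_norm_sq_repr, Finset.mul_sum]
    _ ≤ ∑ j, ‖d j - μ‖ ^ 2 * ‖b.repr v j‖ ^ 2 := by
        gcongr with j; exact hi j (Finset.mem_univ j)
    _ = ‖T v - μ • v‖ ^ 2 := by
        simp only [b.norm_sq_eq_sum_norm_sq_repr (T v - μ • v), hrepr, norm_mul, mul_pow]

end OrthonormalBasis

namespace Matrix.IsHermitian

variable {𝕜 n : Type*} [RCLike 𝕜] [Fintype n] [DecidableEq n] {A : Matrix n n 𝕜}

theorem toEuclideanLin_eigenvectorBasis (hA : A.IsHermitian) (j : n) :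
    toEuclideanLin A (hA.eigenvectorBasis j) = (hA.eigenvalues j : 𝕜) • hA.eigenvectorBasis j := by
  rw [toLpLin_apply, hA.mulVec_eigenvectorBasis, ← RCLike.real_smul_eq_coe_smul]
  rfl

theorem exists_abs_eigenvalues_sub_mul_norm_le [Nonempty n] (hA : A.IsHermitian) (μ : ℝ)
    (v : EuclideanSpace 𝕜 n) : ∃ j, |hA.eigenvalues j - μ| * ‖v‖ ≤ ‖toEuclideanLin A v - μ • v‖ := by
  obtain ⟨j, hj⟩ := hA.eigenvectorBasis.exists_norm_sub_mul_norm_le_norm_apply_sub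
    hA.toEuclideanLin_eigenvectorBasis μ v
  refine ⟨j, ?_⟩
  rwa [← RCLike.ofReal_sub, RCLike.norm_ofReal, ← RCLike.real_smul_eq_coe_smul] at hj

end Matrix.IsHermitian

theorem norm_toEuclideanLin_apply_le {n : ℕ} (M : Matrix (Fin n) (Fin n) ℝ)
    (v : EuclideanSpace ℝ (Fin n)) : ‖toEuclideanLin M v‖ ≤ matrixSpectralNorm n M * ‖v‖ :=
  (LinearMap.toContinuousLinearMap (toEuclideanLin M)).le_opNorm v

theorem Matrix.IsHermitian.exists_abs_eigenvalues_add_sub_le {n : ℕ} {X Y : Matrix (Fin n) (Fin n) ℝ}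
    (hX : X.IsHermitian) (hXY : (X + Y).IsHermitian) (i : Fin n) :
    ∃ j, |hXY.eigenvalues i - hX.eigenvalues j| ≤ matrixSpectralNorm n Y := by
  have : Nonempty (Fin n) := ⟨i⟩
  set v := hXY.eigenvectorBasis i
  have hv : ‖v‖ = 1 := hXY.eigenvectorBasis.orthonormal.1 i
  have hXv : toEuclideanLin X v - hXY.eigenvalues i • v = -toEuclideanLin Y v := by
    have := hXY.toEuclideanLin_eigenvectorBasis i
    rw [map_add, LinearMap.add_apply, RCLike.ofReal_real_eq_id, id] at this
    rw [← this]; abel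
  obtain ⟨j, hj⟩ := hX.exists_abs_eigenvalues_sub_mul_norm_le (hXY.eigenvalues i) v
  refine ⟨j, ?_⟩
  rw [hXv, norm_neg, hv, mul_one, abs_sub_comm] at hj
  exact hj.trans <| (norm_toEuclideanLin_apply_le Y v).trans_eq (by rw [hv, mul_one])

theorem weyl_eigenvalue_perturbation_general (n : ℕ)
    (X Y : Matrix (Fin n) (Fin n) ℝ)
    (hX : X.IsHermitian) (hXY : (X + Y).IsHermitian) :
    (∀ i : Fin n, ∃ j : Fin n,
      |hXY.eigenvalues i - hX.eigenvalues j| ≤ matrixSpectralNorm n Y) ∧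
    ∀ a b : ℝ, (∀ j : Fin n, hX.eigenvalues j ∈ Set.Icc a b) →
      ∀ i : Fin n, hXY.eigenvalues i ∈
        Set.Icc (a - matrixSpectralNorm n Y) (b + matrixSpectralNorm n Y) := by
  refine ⟨hX.exists_abs_eigenvalues_add_sub_le hXY, fun a b hab i ↦ ?_⟩
  obtain ⟨j, hj⟩ := hX.exists_abs_eigenvalues_add_sub_le hXY i
  obtain ⟨hlo, hhi⟩ := abs_le.mp hj
  obtain ⟨ha, hb⟩ := hab j
  exact ⟨by linarith, by linarith⟩

/-- Weyl's inequality, as used in Section 6: for symmetric matrices `X` and `Y`,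
every eigenvalue of `X + Y` lies within `‖Y‖₂` of some eigenvalue of `X`; in
particular, if the eigenvalues of `X` lie in `[a, b]`, the eigenvalues of `X + Y`
lie in `[a − ‖Y‖₂, b + ‖Y‖₂]`. -/
theorem weyl_eigenvalue_perturbation (n : ℕ)
    (X Y : Matrix (Fin n) (Fin n) ℝ)
    (hX : X.IsHermitian) (hY : Y.IsHermitian) (hXY : (X + Y).IsHermitian) :
    (∀ i : Fin n, ∃ j : Fin n,
      |hXY.eigenvalues i - hX.eigenvalues j| ≤ matrixSpectralNorm n Y) ∧
    ∀ a b : ℝ, (∀ j : Fin n, hX.eigenvalues j ∈ Set.Icc a b) →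
      ∀ i : Fin n, hXY.eigenvalues i ∈
        Set.Icc (a - matrixSpectralNorm n Y) (b + matrixSpectralNorm n Y) :=
  weyl_eigenvalue_perturbation_general n X Y hX hXY
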